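/- arXiv:2206.01482 — 2 statements merged into one kernel-verified Lean document; each statement's English description precedes it below -/
import Mathlib

section
/- Asymptotic entropy decay rate: assume the core matrix M̃ has N−1 distinct real eigenvalues μ1 > μ2 > … > μ_{N−1} > 0, with right eigenvectors v^{(i)} and left eigenvectors u^{(i)} normalized by ∑_j v^{(1)}_j = 1 and ⟨u^{(i)}, v^{(i)}⟩ = 1, all extended to ℝ^{N+1} (u^{(i)} by zeros at 0 and N, and v^{(1)} by zeros at 0 and N). Let φ be twice continuously differentiable in a neighbourhood of 1 with φ(1) = 0 and φ''(1) = m. Let p ∈ Δ^N with ⟨u^{(1)},p⟩ > 0 and p ∉ span{e_0, v^{(1)}, e_N}, and let j* = min{ j ≥ 2 : ⟨u^{(j)}, p⟩ ≠ 0 }. Then lim_{n→∞} (μ1/μ_{j*})^{2n} E(M^n p) = (m/2) · (⟨u^{(j*)},p⟩² / ⟨u^{(1)},p⟩²) · ∑_{i=1}^{N−1} (v^{(j*)}_i)² u^{(1)}_i / v^{(1)}_i; in particular E(M^n p) decays exponentially at rate 2 log(μ1/μ_{j*}). -/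
/-!
Since `s 0 = 0` and `s N = 1`, no mass flows from the boundary states `0`, `N` back into the
interior, so on the interior states `1, …, N-1` the chain evolves by the core matrix `M̃`.
Expanding in the biorthogonal eigenbases gives `M̃ⁿ p = ∑ⱼ ⟨u⁽ʲ⁾, p⟩ μⱼⁿ v⁽ʲ⁾`, hence the
relative densities `yₙᵢ = (Mⁿ p)ᵢ / (v⁽¹⁾ᵢ ⟨u⁽¹⁾, Mⁿ p⟩)` satisfy
`(μ₁ / μ_{j*})ⁿ (yₙᵢ - 1) → ⟨u^{(j*)}, p⟩ v^{(j*)}ᵢ / (⟨u⁽¹⁾, p⟩ v⁽¹⁾ᵢ)`.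
The mean of `yₙ - 1` against the weights `v⁽¹⁾ᵢ u⁽¹⁾ᵢ` is zero, so in the Taylor expansion of
`φ` at `1` the linear term drops out of the entropy and only `φ''(1) / 2 · (yₙᵢ - 1)²` survives.
-/

open Finset Matrix Filter

/-- The (N+1)×(N+1) Moran transition matrix (indices 0,…,N) built from a
type selection vector `s`. -/
noncomputable def moranM (N : ℕ) (s : ℕ → ℝ) : Matrix (Fin (N + 1)) (Fin (N + 1)) ℝ :=
  fun i j =>
    if (i : ℕ) + 1 = (j : ℕ) then ((j : ℕ) : ℝ) / N * (1 - s (j : ℕ))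
    else if (i : ℕ) = (j : ℕ) + 1 then ((N : ℝ) - ((j : ℕ) : ℝ)) / N * s (j : ℕ)
    else if (i : ℕ) = (j : ℕ) then
      1 - ((j : ℕ) : ℝ) / N * (1 - s (j : ℕ)) - ((N : ℝ) - ((j : ℕ) : ℝ)) / N * s (j : ℕ)
    else 0

/-- `s` is a type selection vector: `s 0 = 0`, `s N = 1`, `0 < s i < 1` in the interior. -/
def IsTypeSelection (N : ℕ) (s : ℕ → ℝ) : Prop :=
  s 0 = 0 ∧ s N = 1 ∧ ∀ i : ℕ, 0 < i → i < N → 0 < s i ∧ s i < 1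

/-- The core matrix: the (N−1)×(N−1) submatrix of the Moran matrix on states 1,…,N−1. -/
noncomputable def moranCore (N : ℕ) (s : ℕ → ℝ) : Matrix (Fin (N - 1)) (Fin (N - 1)) ℝ :=
  fun i j =>
    moranM N s ⟨(i : ℕ) + 1, by have := i.isLt; omega⟩ ⟨(j : ℕ) + 1, by have := j.isLt; omega⟩

/-- Embedding of core indices {1,…,N−1} into the full index set {0,…,N}. -/
def embIn (N : ℕ) (i : Fin (N - 1)) : Fin (N + 1) :=
  ⟨(i : ℕ) + 1, by have := i.isLt; omega⟩

open Topology

namespace Matrix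

variable {ι K : Type*} [Fintype ι] [Field K] {A : Matrix ι ι K}

lemma dotProduct_eq_zero_of_eigenvalue_ne {u v : ι → K} {c d : K} (hv : A *ᵥ v = c • v)
    (hu : u ᵥ* A = d • u) (hcd : c ≠ d) : u ⬝ᵥ v = 0 := by
  have h := dotProduct_mulVec u A v
  rw [hv, hu, dotProduct_smul, smul_dotProduct, ← sub_eq_zero, ← sub_smul] at h
  exact (smul_eq_zero.mp h).resolve_left (sub_ne_zero.mpr hcd)

lemma sum_mul_div_dotProduct_sub_one_eq_zero {u v q : ι → K} (hv : ∀ i, v i ≠ 0) (huv : u ⬝ᵥ v = 1)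
    (hq : u ⬝ᵥ q ≠ 0) : ∑ i, v i * u i * (q i / (v i * (u ⬝ᵥ q)) - 1) = 0 := by
  have hterm : ∀ i, v i * u i * (q i / (v i * (u ⬝ᵥ q)) - 1) = u i * q i / (u ⬝ᵥ q) - u i * v i :=
    fun i => by field_simp [hv i]
  simp_rw [hterm, Finset.sum_sub_distrib, ← Finset.sum_div]
  rw [← dotProduct, ← dotProduct, huv, div_self hq, sub_self]

variable {μ : ι → K} {U V : ι → ι → K}

lemma eq_sum_dotProduct_smul_of_eigen (hμ : Function.Injective μ)
    (hV : ∀ i, A *ᵥ V i = μ i • V i) (hU : ∀ i, U i ᵥ* A = μ i • U i)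
    (hUV : ∀ i, U i ⬝ᵥ V i = 1) (x : ι → K) :
    x = ∑ j, (U j ⬝ᵥ x) • V j := by
  have hli : LinearIndependent K V :=
    Module.End.eigenvectors_linearIndependent' A.mulVecLin μ hμ V fun i =>
      Module.End.hasEigenvector_iff.mpr ⟨Module.End.mem_eigenspace_iff.mpr (hV i),
        fun h => by simpa [h] using hUV i⟩
  let b := basisOfLinearIndependentOfCardEqFinrank' V hli
    (Module.finrank_fintype_fun_eq_card K).symm
  have hb : ⇑b = V := by simp [b]
  have hx := b.sum_repr x
  rw [hb] at hx
  have hcoeff : ∀ j, U j ⬝ᵥ x = b.repr x j := by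
    intro j
    nth_rw 1 [← hx]
    rw [dotProduct_sum, Finset.sum_eq_single j]
    · rw [dotProduct_smul, hUV, smul_eq_mul, mul_one]
    · intro k _ hkj
      rw [dotProduct_smul, dotProduct_eq_zero_of_eigenvalue_ne (hV k) (hU j) (hμ.ne hkj), smul_zero]
    · simp
  simp_rw [hcoeff]
  exact hx.symm

variable [DecidableEq ι]

lemma pow_mulVec_of_mulVec_eq_smul {v : ι → K} {c : K} (hv : A *ᵥ v = c • v) (n : ℕ) :
    A ^ n *ᵥ v = c ^ n • v := by
  induction n with
  | zero => simp
  | succ n ih => rw [pow_succ, ← mulVec_mulVec, hv, mulVec_smul, ih, smul_smul, pow_succ']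

lemma vecMul_pow_of_vecMul_eq_smul {u : ι → K} {c : K} (hu : u ᵥ* A = c • u) (n : ℕ) :
    u ᵥ* A ^ n = c ^ n • u := by
  induction n with
  | zero => simp
  | succ n ih => rw [pow_succ', ← vecMul_vecMul, hu, smul_vecMul, ih, smul_smul, pow_succ']

lemma dotProduct_pow_mulVec_of_vecMul_eq_smul {u : ι → K} {c : K} (hu : u ᵥ* A = c • u)
    (n : ℕ) (x : ι → K) : u ⬝ᵥ (A ^ n *ᵥ x) = c ^ n * (u ⬝ᵥ x) := by
  rw [dotProduct_mulVec, vecMul_pow_of_vecMul_eq_smul hu, smul_dotProduct, smul_eq_mul]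

lemma pow_mulVec_eq_sum_of_eigen (hμ : Function.Injective μ)
    (hV : ∀ i, A *ᵥ V i = μ i • V i) (hU : ∀ i, U i ᵥ* A = μ i • U i)
    (hUV : ∀ i, U i ⬝ᵥ V i = 1) (n : ℕ) (x : ι → K) :
    A ^ n *ᵥ x = ∑ j, ((U j ⬝ᵥ x) * μ j ^ n) • V j := by
  conv_lhs => rw [eq_sum_dotProduct_smul_of_eigen hμ hV hU hUV x]
  simp_rw [mulVec_sum, mulVec_smul, pow_mulVec_of_mulVec_eq_smul (hV _), smul_smul]

end Matrix

lemma tendsto_pow_mul_sum_sub_dominant {ι : Type*} [Fintype ι] [LinearOrder ι] {μ : ι → ℝ}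
    (hμ : StrictAnti μ) (hpos : ∀ i, 0 < μ i) {a : ι → ℝ} {i₀ k : ι} (hi₀ : ∀ j, i₀ ≤ j)
    (hk : i₀ < k) (ha : ∀ j, i₀ < j → j < k → a j = 0) :
    Tendsto (fun n => (μ i₀ / μ k) ^ n * (∑ j, a j * (μ j / μ i₀) ^ n - a i₀)) atTop
      (𝓝 (a k)) := by
  have hsum : ∀ n, (μ i₀ / μ k) ^ n * (∑ j, a j * (μ j / μ i₀) ^ n - a i₀)
      = ∑ j ∈ univ.erase i₀, a j * (μ j / μ k) ^ n := by
    intro n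
    rw [← Finset.add_sum_erase _ _ (mem_univ i₀), div_self (hpos i₀).ne', one_pow, mul_one,
      add_sub_cancel_left, Finset.mul_sum]
    refine Finset.sum_congr rfl fun j _ => ?_
    rw [mul_left_comm, ← mul_pow, div_mul_div_cancel₀' (hpos i₀).ne']
  have hlim : a k = ∑ j ∈ univ.erase i₀, if j = k then a k else 0 := by
    simp [hk.ne']
  rw [hlim]
  refine (tendsto_finsetSum _ fun j hj => ?_).congr fun n => (hsum n).symm
  rcases lt_trichotomy j k with hjk | rfl | hjk
  · have hj₀ : i₀ < j := lt_of_le_of_ne (hi₀ j) (Ne.symm (ne_of_mem_erase hj))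
    simp [ha j hj₀ hjk, hjk.ne]
  · simp [div_self (hpos j).ne']
  · rw [if_neg hjk.ne', ← mul_zero (a j)]
    exact (tendsto_pow_atTop_nhds_zero_of_lt_one (div_nonneg (hpos j).le (hpos k).le)
      ((div_lt_one (hpos k)).2 (hμ hjk))).const_mul (a j)

lemma tendsto_pow_mul_relative_deviation {ι : Type*} [Fintype ι] [LinearOrder ι]
    {A : Matrix ι ι ℝ} {μ : ι → ℝ} {U V : ι → ι → ℝ} (hμ : StrictAnti μ) (hpos : ∀ i, 0 < μ i)
    (hV : ∀ i, A *ᵥ V i = μ i • V i) (hU : ∀ i, U i ᵥ* A = μ i • U i)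
    (hUV : ∀ i, U i ⬝ᵥ V i = 1) {x : ι → ℝ} {i₀ k : ι} (hi₀ : ∀ j, i₀ ≤ j) (hk : i₀ < k)
    (hx : ∀ j, i₀ < j → j < k → U j ⬝ᵥ x = 0) (hx₀ : U i₀ ⬝ᵥ x ≠ 0) {i : ι} (hVi : V i₀ i ≠ 0) :
    Tendsto (fun n => (μ i₀ / μ k) ^ n * ((A ^ n *ᵥ x) i / (V i₀ i * (U i₀ ⬝ᵥ (A ^ n *ᵥ x))) - 1))
      atTop (𝓝 ((U k ⬝ᵥ x) * V k i / ((U i₀ ⬝ᵥ x) * V i₀ i))) := by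
  set a : ι → ℝ := fun j => (U j ⬝ᵥ x) * V j i / ((U i₀ ⬝ᵥ x) * V i₀ i)
  have ha₀ : a i₀ = 1 := div_self (mul_ne_zero hx₀ hVi)
  have hratio : ∀ n, (A ^ n *ᵥ x) i / (V i₀ i * (U i₀ ⬝ᵥ (A ^ n *ᵥ x)))
      = ∑ j, a j * (μ j / μ i₀) ^ n := by
    intro n
    rw [dotProduct_pow_mulVec_of_vecMul_eq_smul (hU i₀),
      pow_mulVec_eq_sum_of_eigen hμ.injective hV hU hUV, Finset.sum_apply, Finset.sum_div]
    refine Finset.sum_congr rfl fun j _ => ?_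
    have := (pow_pos (hpos i₀) n).ne'
    simp only [Pi.smul_apply, smul_eq_mul, a, div_pow]
    field_simp
  simp_rw [hratio, ← ha₀]
  exact tendsto_pow_mul_sum_sub_dominant hμ hpos hi₀ hk fun j hj hjk => by simp [a, hx j hj hjk]

lemma ContDiffAt.isLittleO_sub_taylor_two {f : ℝ → ℝ} {x : ℝ} (hf : ContDiffAt ℝ 2 f x) :
    (fun y => f y - (f x + deriv f x * (y - x) + iteratedDeriv 2 f x / 2 * (y - x) ^ 2))
      =o[𝓝 x] fun y => (y - x) ^ 2 := by
  obtain ⟨u, hu, hfu⟩ := hf.contDiffOn le_rfl (by simp)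
  obtain ⟨δ, hδ, hball⟩ := Metric.mem_nhds_iff.mp hu
  have hx := Metric.mem_ball_self hδ (x := x)
  have h := taylor_isLittleO (n := 2) (convex_ball x δ) hx (hfu.mono hball)
  rw [Metric.isOpen_ball.nhdsWithin_eq hx] at h
  refine h.congr_left fun y => ?_
  simp only [taylor_within_apply, Finset.sum_range_succ, Finset.sum_range_zero]
  simp [iteratedDerivWithin_eq_iteratedDeriv Metric.isOpen_ball.uniqueDiffOn hf hx,
    derivWithin_of_isOpen Metric.isOpen_ball hx]
  ring

lemma ContDiffAt.tendsto_sq_mul_sub_linear {f : ℝ → ℝ} {x : ℝ} (hf : ContDiffAt ℝ 2 f x)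
    {r y : ℕ → ℝ} {L : ℝ} (hr : Tendsto r atTop atTop)
    (hy : Tendsto (fun n => r n * (y n - x)) atTop (𝓝 L)) :
    Tendsto (fun n => r n ^ 2 * (f (y n) - f x - deriv f x * (y n - x))) atTop
      (𝓝 (iteratedDeriv 2 f x / 2 * L ^ 2)) := by
  have hyx : Tendsto y atTop (𝓝 x) := by
    have h := tendsto_const_nhds (x := x) |>.add (hr.inv_tendsto_atTop.mul hy)
    rw [zero_mul, add_zero] at h
    refine h.congr' ?_
    filter_upwards [hr.eventually_gt_atTop 0] with n hn
    simp only [Pi.inv_apply]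
    field_simp
    ring
  have hsq : Tendsto (fun n => r n ^ 2 * (y n - x) ^ 2) atTop (𝓝 (L ^ 2)) := by
    simpa only [mul_pow] using hy.pow 2
  have hrem : Tendsto (fun n => r n ^ 2 * (f (y n) - (f x + deriv f x * (y n - x)
      + iteratedDeriv 2 f x / 2 * (y n - x) ^ 2))) atTop (𝓝 0) :=
    (Asymptotics.isLittleO_one_iff ℝ).mp <|
      ((Asymptotics.isBigO_refl _ _).mul_isLittleO
        (hf.isLittleO_sub_taylor_two.comp_tendsto hyx)).trans_isBigO (hsq.isBigO_one ℝ)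
  have h := hrem.add (hsq.const_mul (iteratedDeriv 2 f x / 2))
  rw [zero_add] at h
  exact h.congr fun n => by ring

lemma ContDiffAt.tendsto_sq_mul_sum_of_weighted_mean_eq_zero {ι : Type*} [Fintype ι]
    {f : ℝ → ℝ} {x : ℝ} (hf : ContDiffAt ℝ 2 f x) (hfx : f x = 0) {r : ℕ → ℝ}
    (hr : Tendsto r atTop atTop)
    {w : ι → ℝ} {y : ℕ → ι → ℝ} {L : ι → ℝ} (hmean : ∀ n, ∑ i, w i * (y n i - x) = 0)
    (hy : ∀ i, Tendsto (fun n => r n * (y n i - x)) atTop (𝓝 (L i))) :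
    Tendsto (fun n => r n ^ 2 * ∑ i, f (y n i) * w i) atTop
      (𝓝 (iteratedDeriv 2 f x / 2 * ∑ i, L i ^ 2 * w i)) := by
  have hsplit : ∀ n, r n ^ 2 * ∑ i, f (y n i) * w i
      = ∑ i, r n ^ 2 * (f (y n i) - f x - deriv f x * (y n i - x)) * w i := by
    intro n
    calc r n ^ 2 * ∑ i, f (y n i) * w i
        = r n ^ 2 * ∑ i, f (y n i) * w i
          - r n ^ 2 * deriv f x * ∑ i, w i * (y n i - x) := by rw [hmean, mul_zero, sub_zero]
      _ = _ := by
        simp only [Finset.mul_sum, ← Finset.sum_sub_distrib, hfx]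
        exact Finset.sum_congr rfl fun i _ => by ring
  simp_rw [hsplit, Finset.mul_sum, ← mul_assoc]
  exact tendsto_finsetSum _ fun i _ => (hf.tendsto_sq_mul_sub_linear hr (hy i)).mul_const (w i)

lemma embIn_injective (N : ℕ) : Function.Injective (embIn N) :=
  fun a b h => Fin.ext (by simpa [embIn] using congrArg Fin.val h)

lemma moranM_embIn_eq_zero_of_notMem_range {N : ℕ} {s : ℕ → ℝ} (hs0 : s 0 = 0) (hsN : s N = 1)
    (i : Fin (N - 1)) {j : Fin (N + 1)} (hj : j ∉ Set.range (embIn N)) :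
    moranM N s (embIn N i) j = 0 := by
  have hi := i.isLt
  have hj' : (j : ℕ) = 0 ∨ (j : ℕ) = N := by
    by_contra! h
    exact hj ⟨⟨j - 1, by omega⟩, Fin.ext (by simp [embIn]; omega)⟩
  rcases hj' with h | h <;> simp only [moranM, embIn, h] <;> split_ifs <;> simp_all; omega

lemma moranM_mulVec_embIn {N : ℕ} {s : ℕ → ℝ} (hs0 : s 0 = 0) (hsN : s N = 1)
    (q : Fin (N + 1) → ℝ) (i : Fin (N - 1)) :
    (moranM N s *ᵥ q) (embIn N i) = (moranCore N s *ᵥ fun j => q (embIn N j)) i :=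
  (Fintype.sum_of_injective _ (embIn_injective N) _ _
    (fun _ hj => mul_eq_zero_of_left (moranM_embIn_eq_zero_of_notMem_range hs0 hsN i hj) _)
    (fun _ => rfl)).symm

lemma moranM_pow_mulVec_embIn {N : ℕ} {s : ℕ → ℝ} (hs0 : s 0 = 0) (hsN : s N = 1)
    (p : Fin (N + 1) → ℝ) (n : ℕ) (i : Fin (N - 1)) :
    (moranM N s ^ n *ᵥ p) (embIn N i) = (moranCore N s ^ n *ᵥ fun j => p (embIn N j)) i := by
  induction n generalizing p with
  | zero => simp
  | succ n ih =>
    rw [pow_succ, pow_succ, ← mulVec_mulVec, ← mulVec_mulVec, ih]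
    congr 2
    exact funext (moranM_mulVec_embIn hs0 hsN p)

/-- asymptotic entropy decay rate: if the core matrix has N−1
distinct positive eigenvalues μ_{i0} = μ₁ > μ₂ > … > 0, and j* is the least
index > i0 with ⟨u^{(j*)},p⟩ ≠ 0, then (μ₁/μ_{j*})^{2n} E(Mⁿp) converges to
(m/2)·(⟨u^{(j*)},p⟩²/⟨u^{(1)},p⟩²)·∑ᵢ (v^{(j*)}ᵢ)² u^{(1)}ᵢ/v^{(1)}ᵢ. -/
theorem moran_entropy_asymptotic_decay
    (N : ℕ) (s : ℕ → ℝ) (hs : IsTypeSelection N s)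
    (μ : Fin (N - 1) → ℝ) (hμanti : StrictAnti μ) (hμpos : ∀ i, 0 < μ i)
    (V U : Fin (N - 1) → (Fin (N - 1) → ℝ))
    (hMV : ∀ i, (moranCore N s).mulVec (V i) = μ i • V i)
    (hUM : ∀ i, (moranCore N s).vecMul (U i) = μ i • U i)
    (i0 : Fin (N - 1)) (hi0 : (i0 : ℕ) = 0)
    (hUV : ∀ i, ∑ j, U i j * V i j = 1)
    (hVpos : ∀ j, 0 < V i0 j)
    (φ : ℝ → ℝ) (hφC2 : ContDiffAt ℝ 2 φ 1) (hφ1 : φ 1 = 0)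
    (m : ℝ) (hm : iteratedDeriv 2 φ 1 = m)
    (p : Fin (N + 1) → ℝ)
    (hip : 0 < ∑ i : Fin (N - 1), U i0 i * p (embIn N i))
    (jst : Fin (N - 1)) (hjst : i0 < jst)
    (hjmin : ∀ j : Fin (N - 1), i0 < j → j < jst →
      ∑ i : Fin (N - 1), U j i * p (embIn N i) = 0)
    (E : (Fin (N + 1) → ℝ) → ℝ)
    (hE : ∀ q : Fin (N + 1) → ℝ, E q = ∑ i : Fin (N - 1),
      φ (q (embIn N i) / (V i0 i * ∑ j : Fin (N - 1), U i0 j * q (embIn N j)))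
        * V i0 i * U i0 i) :
    Filter.Tendsto
      (fun n : ℕ => (μ i0 / μ jst) ^ (2 * n) * E ((moranM N s ^ n).mulVec p))
      Filter.atTop
      (nhds (m / 2
        * ((∑ i : Fin (N - 1), U jst i * p (embIn N i)) ^ 2
            / (∑ i : Fin (N - 1), U i0 i * p (embIn N i)) ^ 2)
        * ∑ i : Fin (N - 1), (V jst i) ^ 2 * U i0 i / V i0 i)) := by
  obtain ⟨hs0, hsN, -⟩ := hs
  set A := moranCore N s
  set x : Fin (N - 1) → ℝ := fun i => p (embIn N i)
  have hVne : ∀ i, V i0 i ≠ 0 := fun i => (hVpos i).ne'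
  have hx₀ : U i0 ⬝ᵥ x ≠ 0 := hip.ne'
  have hE' : ∀ n, E (moranM N s ^ n *ᵥ p) = ∑ i, φ ((A ^ n *ᵥ x) i
      / (V i0 i * (U i0 ⬝ᵥ (A ^ n *ᵥ x)))) * (V i0 i * U i0 i) := by
    intro n
    simp only [hE, moranM_pow_mulVec_embIn hs0 hsN, mul_assoc]
    rfl
  have hmean : ∀ n, ∑ i, V i0 i * U i0 i * ((A ^ n *ᵥ x) i
      / (V i0 i * (U i0 ⬝ᵥ (A ^ n *ᵥ x))) - 1) = 0 := fun n =>
    sum_mul_div_dotProduct_sub_one_eq_zero hVne (hUV i0) <| by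
      rw [dotProduct_pow_mulVec_of_vecMul_eq_smul (hUM i0)]
      exact mul_ne_zero (pow_ne_zero _ (hμpos i0).ne') hx₀
  have hdev := fun i => tendsto_pow_mul_relative_deviation hμanti hμpos hMV hUM hUV
    (fun j => Fin.le_def.mpr (by omega)) hjst hjmin hx₀ (hVne i)
  have hlim := hφC2.tendsto_sq_mul_sum_of_weighted_mean_eq_zero hφ1
    (tendsto_pow_atTop_atTop_of_one_lt ((one_lt_div (hμpos jst)).2 (hμanti hjst))) hmean hdev
  have hval : m / 2 * ((U jst ⬝ᵥ x) ^ 2 / (U i0 ⬝ᵥ x) ^ 2) * ∑ i, V jst i ^ 2 * U i0 i / V i0 i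
      = iteratedDeriv 2 φ 1 / 2 * ∑ i, ((U jst ⬝ᵥ x) * V jst i / ((U i0 ⬝ᵥ x) * V i0 i)) ^ 2
        * (V i0 i * U i0 i) := by
    rw [hm, mul_assoc, Finset.mul_sum]
    congr 1
    refine Finset.sum_congr rfl fun i _ => ?_
    field_simp
  simp only [hE', pow_mul']
  convert hlim using 2
  exact hval
end

section
/- Nonnegativity of the entropy: for every convex φ : [0,∞) → ℝ with φ(0) = φ(1) = 0 and every p ∈ Δ^N with ⟨u,p⟩ > 0, one has E(p) ≥ 0. Moreover, if φ is strictly convex, then E(p) = 0 if and only if p = α e_0 + λ v + β e_N for some α, β, λ ≥ 0 with α + β + λ = 1. -/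
/-!
Put `S = ⟨u, p⟩` and `w i = v i u i`; the weights `w` sum to `⟨u, v⟩ = 1`, and the entropy is
`∑ w i φ(x i)` for the ratios `x i = p i / (S v i)`, whose `w`-mean is `∑ u i p i / S = 1`.
Jensen's inequality therefore gives `E(p) ≥ φ 1 = 0`. For strictly convex `φ` equality forces
`x i = 1` for all `i`, i.e. the interior part of `p` is `S v`, and the remaining mass of `p` sits
on the absorbing states `0` and `N`.
-/

open Finset Matrix Filter

section Jensen

variable {ι : Type*} {t : Finset ι} {s : Set ℝ} {w x : ι → ℝ} {φ : ℝ → ℝ}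

theorem ConvexOn.sum_mul_comp_nonneg (hφ : ConvexOn ℝ s φ) (hφ1 : φ 1 = 0)
    (hw : ∀ i ∈ t, 0 ≤ w i) (hw1 : ∑ i ∈ t, w i = 1) (hx : ∀ i ∈ t, x i ∈ s)
    (hwx : ∑ i ∈ t, w i * x i = 1) : 0 ≤ ∑ i ∈ t, w i * φ (x i) := by
  simpa only [smul_eq_mul, hwx, hφ1] using hφ.map_sum_le hw hw1 hx

theorem StrictConvexOn.sum_mul_comp_eq_zero_iff (hφ : StrictConvexOn ℝ s φ) (hφ1 : φ 1 = 0)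
    (hw : ∀ i ∈ t, 0 < w i) (hw1 : ∑ i ∈ t, w i = 1) (hx : ∀ i ∈ t, x i ∈ s)
    (hwx : ∑ i ∈ t, w i * x i = 1) : ∑ i ∈ t, w i * φ (x i) = 0 ↔ ∀ i ∈ t, x i = 1 := by
  simpa only [smul_eq_mul, hwx, hφ1, eq_comm (a := (0 : ℝ))] using hφ.map_sum_eq_iff hw hw1 hx

end Jensen

section PhiEntropy

variable {ι : Type*} [Fintype ι] {φ : ℝ → ℝ} {u v q : ι → ℝ}

/-- The entropy `E(p)` as a function of the interior masses `q i = p (i + 1)`. -/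
noncomputable def phiEntropy (φ : ℝ → ℝ) (u v q : ι → ℝ) : ℝ :=
  ∑ i, φ (q i / (v i * ∑ j, u j * q j)) * v i * u i

theorem phiEntropy_eq_sum_mul_comp (φ : ℝ → ℝ) (u v q : ι → ℝ) :
    phiEntropy φ u v q = ∑ i, v i * u i * φ (q i / (v i * ∑ j, u j * q j)) :=
  sum_congr rfl fun _ _ => by ring

theorem sum_mul_mul_div_mul_sum_eq_one (hv : ∀ i, v i ≠ 0) (hS : ∑ i, u i * q i ≠ 0) :
    ∑ i, v i * u i * (q i / (v i * ∑ j, u j * q j)) = 1 := by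
  rw [← div_self hS, sum_div]
  exact sum_congr rfl fun i _ => by field_simp [hv i]

variable (hu : ∀ i, 0 < u i) (hv : ∀ i, 0 < v i) (huv : ∑ i, u i * v i = 1)
  (hq : ∀ i, 0 ≤ q i) (hS : 0 < ∑ i, u i * q i)
include hu hv huv hq hS

theorem phiEntropy_nonneg (hφ : ConvexOn ℝ (Set.Ici 0) φ) (hφ1 : φ 1 = 0) :
    0 ≤ phiEntropy φ u v q := by
  rw [phiEntropy_eq_sum_mul_comp]
  exact hφ.sum_mul_comp_nonneg hφ1 (fun i _ => (mul_pos (hv i) (hu i)).le)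
    (by simpa only [mul_comm] using huv)
    (fun i _ => div_nonneg (hq i) (mul_pos (hv i) hS).le)
    (sum_mul_mul_div_mul_sum_eq_one (fun i => (hv i).ne') hS.ne')

theorem phiEntropy_eq_zero_iff (hφ : StrictConvexOn ℝ (Set.Ici 0) φ) (hφ1 : φ 1 = 0) :
    phiEntropy φ u v q = 0 ↔ ∀ i, q i = (∑ j, u j * q j) * v i := by
  rw [phiEntropy_eq_sum_mul_comp, hφ.sum_mul_comp_eq_zero_iff hφ1
    (fun i _ => mul_pos (hv i) (hu i)) (by simpa only [mul_comm] using huv)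
    (fun i _ => div_nonneg (hq i) (mul_pos (hv i) hS).le)
    (sum_mul_mul_div_mul_sum_eq_one (fun i => (hv i).ne') hS.ne')]
  simp only [mem_univ, true_implies]
  exact forall_congr' fun i => by rw [mul_comm (v i), div_eq_one_iff_eq (mul_pos hS (hv i)).ne']

end PhiEntropy

section Indices

variable {N : ℕ}

theorem embIn_ne_zero (i : Fin (N - 1)) : embIn N i ≠ 0 :=
  Fin.ne_of_val_ne (Nat.succ_ne_zero _)

theorem embIn_ne_last (i : Fin (N - 1)) : embIn N i ≠ Fin.last N :=
  Fin.ne_of_val_ne (by simp only [embIn, Fin.val_last]; omega)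

theorem eq_zero_or_eq_last_or_exists_embIn_eq (k : Fin (N + 1)) :
    k = 0 ∨ k = Fin.last N ∨ ∃ i, embIn N i = k := by
  obtain ⟨k, hk⟩ := k
  by_cases h0 : k = 0
  · exact .inl (Fin.ext h0)
  by_cases hN : k = N
  · exact .inr (.inl (Fin.ext hN))
  exact .inr (.inr ⟨⟨k - 1, by omega⟩, Fin.ext (by simp only [embIn]; omega)⟩)

theorem sum_eq_zero_add_sum_embIn_add_last {M : Type*} [AddCommMonoid M] (hN : N ≠ 0)
    (f : Fin (N + 1) → M) : ∑ k, f k = f 0 + ∑ i, f (embIn N i) + f (Fin.last N) := by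
  obtain ⟨n, rfl⟩ := Nat.exists_eq_add_one_of_ne_zero hN
  rw [Fin.sum_univ_succ, Fin.sum_univ_castSucc, ← add_assoc]
  rfl

theorem eq_smul_single_add_smul_add_smul_single_iff (hN : N ≠ 0) {p w : Fin (N + 1) → ℝ}
    (hw0 : w 0 = 0) (hwN : w (Fin.last N) = 0) {α β c : ℝ} :
    p = α • Pi.single 0 1 + c • w + β • Pi.single (Fin.last N) 1 ↔
      p 0 = α ∧ p (Fin.last N) = β ∧ ∀ i, p (embIn N i) = c * w (embIn N i) := by
  have h0N : (0 : Fin (N + 1)) ≠ Fin.last N := Fin.ne_of_val_ne (Ne.symm hN)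
  constructor
  · rintro rfl
    simp [hw0, hwN, h0N, h0N.symm, embIn_ne_zero, embIn_ne_last]
  · rintro ⟨h0, hN', hi⟩
    funext k
    rcases eq_zero_or_eq_last_or_exists_embIn_eq k with rfl | rfl | ⟨i, rfl⟩
    · simp [h0, hw0, h0N]
    · simp [hN', hwN, h0N.symm]
    · simp [hi, embIn_ne_zero, embIn_ne_last]

end Indices

/-- nonnegativity of the entropy: E(p) ≥ 0 for convex φ with
φ(0) = φ(1) = 0; and if φ is strictly convex, E(p) = 0 iff p is a convex
combination of e₀, the zero-extended quasi-stationary vector v, and e_N. -/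
theorem moran_entropy_nonneg
    (N : ℕ)
    (u v : Fin (N - 1) → ℝ)
    (hu : ∀ i, 0 < u i) (hv : ∀ i, 0 < v i)
    (hvsum : ∑ i, v i = 1) (huv : ∑ i, u i * v i = 1)
    (vext : Fin (N + 1) → ℝ)
    (hvx0 : vext ⟨0, by omega⟩ = 0) (hvxN : vext (Fin.last N) = 0)
    (hvxi : ∀ i : Fin (N - 1), vext (embIn N i) = v i)
    (φ : ℝ → ℝ) (hφ : ConvexOn ℝ (Set.Ici 0) φ) (hφ1 : φ 1 = 0)
    (p : Fin (N + 1) → ℝ) (hp : ∀ i, 0 ≤ p i) (hpsum : ∑ i, p i = 1)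
    (hip : 0 < ∑ i : Fin (N - 1), u i * p (embIn N i))
    (E : (Fin (N + 1) → ℝ) → ℝ)
    (hE : ∀ q : Fin (N + 1) → ℝ, E q = ∑ i : Fin (N - 1),
      φ (q (embIn N i) / (v i * ∑ j : Fin (N - 1), u j * q (embIn N j))) * v i * u i) :
    0 ≤ E p ∧
    (StrictConvexOn ℝ (Set.Ici 0) φ →
      (E p = 0 ↔
        ∃ α β lam : ℝ, 0 ≤ α ∧ 0 ≤ β ∧ 0 ≤ lam ∧ α + β + lam = 1 ∧
          p = α • (Pi.single (⟨0, by omega⟩ : Fin (N + 1)) 1 : Fin (N + 1) → ℝ)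
              + lam • vext
              + β • (Pi.single (Fin.last N) 1 : Fin (N + 1) → ℝ))) := by
  have hN0 : N ≠ 0 := by
    obtain ⟨i, -⟩ := Finset.nonempty_of_sum_ne_zero hip.ne'
    have := i.isLt
    omega
  have hEp : E p = phiEntropy φ u v (fun i => p (embIn N i)) := hE p
  refine ⟨hEp ▸ phiEntropy_nonneg hu hv huv (fun _ => hp _) hip hφ hφ1, fun hsc => ?_⟩
  rw [hEp, phiEntropy_eq_zero_iff hu hv huv (fun _ => hp _) hip hsc hφ1]
  simp_rw [Fin.mk_zero', eq_smul_single_add_smul_add_smul_single_iff hN0 hvx0 hvxN, hvxi]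
  constructor
  · intro hpv
    refine ⟨p 0, p (Fin.last N), _, hp _, hp _, hip.le, ?_, rfl, rfl, hpv⟩
    have hsplit := sum_eq_zero_add_sum_embIn_add_last hN0 p
    rw [hpsum, sum_congr rfl fun i _ => hpv i, ← mul_sum, hvsum, mul_one] at hsplit
    linarith
  · rintro ⟨α, β, lam, -, -, -, -, -, -, hpv⟩
    have hS : ∑ j, u j * p (embIn N j) = lam := by
      simp_rw [hpv, mul_left_comm, ← mul_sum, huv, mul_one]
    simpa only [hS] using hpv
end
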